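/- Let v : ℝ^d → ℝ be bounded and suppose there are constants C₁, C₂ ≥ 0 such that |v(x+y) − v(x)| ≤ C₁|y| and |v(x+y) + v(x−y) − 2v(x)| ≤ C₂|y|² for all x, y ∈ ℝ^d. If moreover Σ_β ω_β ≤ M r^{−p} for a constant M > 0, then for every x ∈ ℝ^d, |D_p^h v(x)| ≤ ((p−1)/2) C₁^{p−2} C₂ Σ_{β∈ℤ^d} |y_β|^p ω_β ≤ ((p−1)/2) C₁^{p−2} C₂ M. -/

import Mathlib

open scoped BigOperators

/-- `J_p(ξ) = |ξ|^{p-2} ξ`. -/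
noncomputable def Jp (p ξ : ℝ) : ℝ := |ξ| ^ (p - 2) * ξ

/-- The grid point `y_β = h β ∈ ℝ^d` for `β ∈ ℤ^d`. -/
noncomputable def ygrid (d : ℕ) (h : ℝ) (β : Fin d → ℤ) : EuclideanSpace ℝ (Fin d) :=
  (WithLp.equiv 2 (Fin d → ℝ)).symm (fun i => h * (β i : ℝ))

/-- The discrete `p`-Laplacian `D_p^h ψ(x) = Σ_β J_p(ψ(x+y_β) - ψ(x)) ω_β`. -/
noncomputable def Dph (d : ℕ) (p h : ℝ) (ω : (Fin d → ℤ) → ℝ)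
    (ψ : EuclideanSpace ℝ (Fin d) → ℝ) (x : EuclideanSpace ℝ (Fin d)) : ℝ :=
  ∑ᶠ β, Jp p (ψ (x + ygrid d h β) - ψ x) * ω β

/-!
Since `ω` is even, pairing `β` with `-β` gives
`2 D_p^h v(x) = Σ_β (J_p(a_β) + J_p(b_β)) ω_β` with `a_β = v(x + y_β) - v(x)` and
`b_β = v(x - y_β) - v(x)`. On `[-K, K]` the odd map `J_p`, whose derivative is
`(p - 1)|ξ|^(p-2)`, is `(p - 1) K^(p-2)`-Lipschitz; with `K = C₁|y_β|` and
`|a_β + b_β| ≤ C₂|y_β|²` each pair contributes at most `(p - 1) C₁^(p-2) C₂ |y_β|^p ω_β`.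
For the second inequality, `|y_β| < r` on the support of `ω`, so
`Σ_β |y_β|^p ω_β ≤ r^p Σ_β ω_β ≤ M`.
-/
theorem abs_finsum_le_finsum_abs {α G : Type*} [AddCommGroup G] [LinearOrder G]
    [IsOrderedAddMonoid G] (f : α → G) : |∑ᶠ a, f a| ≤ ∑ᶠ a, |f a| := by
  by_cases hf : f.HasFiniteSupport
  · have habs : (fun a => |f a|).support ⊆ hf.toFinset := fun a ha =>
      Set.Finite.mem_toFinset hf |>.2 (by simpa using ha)
    rw [finsum_eq_sum f hf, finsum_eq_sum_of_support_subset _ habs]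
    exact Finset.abs_sum_le_sum_abs _ _
  · rw [finsum_of_not_hasFiniteSupport hf, abs_zero]
    exact finsum_nonneg fun _ => abs_nonneg _

theorem finsum_add_comp_neg {G M : Type*} [AddGroup G] [AddCommMonoid M] {f : G → M}
    (hf : f.HasFiniteSupport) : ∑ᶠ g, (f g + f (-g)) = ∑ᶠ g, f g + ∑ᶠ g, f g := by
  rw [finsum_add_distrib hf (hf.fun_comp_of_injective neg_injective)]
  congr 1
  exact finsum_comp_equiv (Equiv.neg G)

theorem abs_finsum_le_finsum_of_abs_add_comp_neg_le {G : Type*} [AddGroup G] {f g : G → ℝ}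
    (hf : f.HasFiniteSupport) (hg : g.HasFiniteSupport) (hfg : ∀ a, |f a + f (-a)| ≤ 2 * g a) :
    |∑ᶠ a, f a| ≤ ∑ᶠ a, g a := by
  have hpair : (fun a => |f a + f (-a)|).HasFiniteSupport :=
    (hf.fun_add (hf.fun_comp_of_injective neg_injective)).fun_comp abs_zero
  have htwice : 2 * |∑ᶠ a, f a| ≤ 2 * ∑ᶠ a, g a := calc
    2 * |∑ᶠ a, f a| = |∑ᶠ a, (f a + f (-a))| := by
      rw [finsum_add_comp_neg hf, ← two_mul, abs_mul, abs_two]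
    _ ≤ ∑ᶠ a, |f a + f (-a)| := abs_finsum_le_finsum_abs _
    _ ≤ ∑ᶠ a, 2 * g a := finsum_le_finsum' hpair (hg.fun_mul_right _) hfg
    _ = 2 * ∑ᶠ a, g a := (mul_finsum _ _).symm
  linarith

theorem finsum_mul_le_mul_finsum {α : Type*} {f w : α → ℝ} {c : ℝ} (hw : w.HasFiniteSupport)
    (hw₀ : ∀ a, 0 ≤ w a) (hf : ∀ a, w a ≠ 0 → f a ≤ c) : ∑ᶠ a, f a * w a ≤ c * ∑ᶠ a, w a := by
  rw [mul_finsum]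
  refine finsum_le_finsum' (hw.mul_right f) (hw.mul_right _) fun a => ?_
  rcases eq_or_ne (w a) 0 with ha | ha
  · simp [ha]
  · exact mul_le_mul_of_nonneg_right (hf a ha) (hw₀ a)

theorem ygrid_neg (d : ℕ) (h : ℝ) (β : Fin d → ℤ) : ygrid d h (-β) = -ygrid d h β := by
  ext i; simp [ygrid]

theorem abs_mul_abs_le_norm_ygrid (d : ℕ) (h : ℝ) (β : Fin d → ℤ) (i : Fin d) :
    |h| * |(β i : ℝ)| ≤ ‖ygrid d h β‖ := by
  simpa [ygrid, abs_mul] using PiLp.norm_apply_le (ygrid d h β) i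

theorem finite_setOf_norm_ygrid_lt (d : ℕ) {h : ℝ} (hh : h ≠ 0) (r : ℝ) :
    {β | ‖ygrid d h β‖ < r}.Finite := by
  refine (isCompact_closedBall (0 : Fin d → ℤ) (r / |h|)).finite_of_discrete.subset fun β hβ => ?_
  have hr : 0 ≤ r / |h| := div_nonneg ((norm_nonneg _).trans (le_of_lt hβ)) (abs_nonneg h)
  rw [mem_closedBall_zero_iff, pi_norm_le_iff_of_nonneg hr]
  intro i
  rw [le_div_iff₀ (abs_pos.2 hh), Int.norm_eq_abs, mul_comm]
  exact ((abs_mul_abs_le_norm_ygrid d h β i).trans_lt hβ).le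

theorem Jp_neg (p ξ : ℝ) : Jp p (-ξ) = -Jp p ξ := by
  simp [Jp]

theorem Jp_of_nonneg {p ξ : ℝ} (hp : p ≠ 1) (hξ : 0 ≤ ξ) : Jp p ξ = ξ ^ (p - 1) := by
  rw [Jp, abs_of_nonneg hξ, ← Real.rpow_add_one' hξ (by contrapose! hp; linarith)]
  ring_nf

theorem Jp_le_Jp_of_abs_le {p a c : ℝ} (hp : 2 ≤ p) (hca : |c| ≤ a) : Jp p c ≤ Jp p a := by
  have ha : 0 ≤ a := (abs_nonneg c).trans hca
  calc Jp p c ≤ |c| ^ (p - 2) * |c| := by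
        unfold Jp; gcongr; exact le_abs_self c
    _ ≤ |a| ^ (p - 2) * a := by
        rw [abs_of_nonneg ha]; gcongr

-- Bernoulli's inequality, rescaled to the tangent-line bound for `t ↦ t ^ s` at `a`.
theorem rpow_sub_rpow_le_mul_sub {s a c : ℝ} (hs : 1 ≤ s) (hc : 0 ≤ c) (hca : c ≤ a) :
    a ^ s - c ^ s ≤ s * a ^ (s - 1) * (a - c) := by
  rcases (hc.trans hca).eq_or_lt with rfl | ha
  · obtain rfl : c = 0 := le_antisymm hca hc
    simp
  have hbern := one_add_mul_self_le_rpow_one_add (s := c / a - 1)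
    (by linarith [div_nonneg hc ha.le]) hs
  rw [add_sub_cancel, Real.div_rpow hc ha.le, le_div_iff₀ (Real.rpow_pos_of_pos ha s)] at hbern
  have hsplit : a ^ s = a ^ (s - 1) * a := by
    rw [Real.rpow_sub_one ha.ne', div_mul_cancel₀ _ ha.ne']
  have hexpand : (1 + s * (c / a - 1)) * a ^ s = a ^ s + s * a ^ (s - 1) * (c - a) := by
    rw [hsplit]; field_simp
  linarith

theorem Jp_sub_Jp_le_of_abs_le {p a c : ℝ} (hp : 2 ≤ p) (hca : |c| ≤ a) :
    Jp p a - Jp p c ≤ (p - 1) * a ^ (p - 2) * (a - c) := by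
  have ha : 0 ≤ a := (abs_nonneg c).trans hca
  rcases le_or_gt 0 c with hc | hc
  · have hp1 : p ≠ 1 := by linarith
    rw [Jp_of_nonneg hp1 ha, Jp_of_nonneg hp1 hc, show p - 2 = p - 1 - 1 by ring]
    exact rpow_sub_rpow_le_mul_sub (by linarith) hc ((le_abs_self c).trans hca)
  · have hpow : |c| ^ (p - 2) ≤ a ^ (p - 2) := by gcongr
    have hapow : 0 ≤ a ^ (p - 2) := by positivity
    rw [abs_of_neg hc] at hca hpow
    unfold Jp
    rw [abs_of_nonneg ha, abs_of_neg hc]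
    nlinarith [mul_le_mul_of_nonneg_right hpow (neg_nonneg.2 hc.le),
      mul_nonneg (mul_nonneg (sub_nonneg.2 hp) hapow) (by linarith : (0 : ℝ) ≤ a - c)]

theorem abs_Jp_sub_Jp_le {p a c K : ℝ} (hp : 2 ≤ p) (ha : |a| ≤ K) (hc : |c| ≤ K) :
    |Jp p a - Jp p c| ≤ (p - 1) * K ^ (p - 2) * |a - c| := by
  wlog hca : |c| ≤ |a| generalizing a c
  · rw [abs_sub_comm, abs_sub_comm a]
    exact this hc ha (le_of_not_ge hca)
  wlog ha₀ : 0 ≤ a generalizing a c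
  · have := this (a := -a) (c := -c) (by rwa [abs_neg]) (by rwa [abs_neg])
      (by rwa [abs_neg, abs_neg]) (by linarith)
    rwa [Jp_neg, Jp_neg, neg_sub_neg, neg_sub_neg, abs_sub_comm, abs_sub_comm c] at this
  rw [abs_of_nonneg ha₀] at ha hca
  rw [abs_of_nonneg (sub_nonneg.2 (Jp_le_Jp_of_abs_le hp hca)),
    abs_of_nonneg (sub_nonneg.2 ((le_abs_self c).trans hca))]
  calc Jp p a - Jp p c ≤ (p - 1) * a ^ (p - 2) * (a - c) := Jp_sub_Jp_le_of_abs_le hp hca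
    _ ≤ (p - 1) * K ^ (p - 2) * (a - c) := by
        have : c ≤ a := (le_abs_self c).trans hca
        gcongr
        linarith

theorem abs_Jp_add_Jp_le {p a b K : ℝ} (hp : 2 ≤ p) (ha : |a| ≤ K) (hb : |b| ≤ K) :
    |Jp p a + Jp p b| ≤ (p - 1) * K ^ (p - 2) * |a + b| := by
  simpa [Jp_neg] using abs_Jp_sub_Jp_le (c := -b) hp ha (by rwa [abs_neg])

theorem abs_Jp_add_Jp_le_of_difference_bounds {E : Type*} [SeminormedAddCommGroup E]
    {p C₁ C₂ : ℝ} (hp : 2 ≤ p) (hC₁ : 0 ≤ C₁) {v : E → ℝ}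
    (h1 : ∀ x y, |v (x + y) - v x| ≤ C₁ * ‖y‖)
    (h2 : ∀ x y, |v (x + y) + v (x - y) - 2 * v x| ≤ C₂ * ‖y‖ ^ (2 : ℕ)) (x y : E) :
    |Jp p (v (x + y) - v x) + Jp p (v (x - y) - v x)| ≤ (p - 1) * C₁ ^ (p - 2) * C₂ * ‖y‖ ^ p := by
  have hminus : |v (x - y) - v x| ≤ C₁ * ‖y‖ := by
    simpa [← sub_eq_add_neg] using h1 x (-y)
  have hsum : |v (x + y) - v x + (v (x - y) - v x)| ≤ C₂ * ‖y‖ ^ (2 : ℕ) := by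
    convert h2 x y using 2; ring
  have hnorm : ‖y‖ ^ p = ‖y‖ ^ (p - 2) * ‖y‖ ^ (2 : ℕ) := by
    rw [← Real.rpow_natCast, ← Real.rpow_add' (norm_nonneg y) (by push_cast; linarith)]
    push_cast; ring_nf
  calc _ ≤ (p - 1) * (C₁ * ‖y‖) ^ (p - 2) * |v (x + y) - v x + (v (x - y) - v x)| :=
        abs_Jp_add_Jp_le hp (h1 x y) hminus
    _ ≤ (p - 1) * (C₁ * ‖y‖) ^ (p - 2) * (C₂ * ‖y‖ ^ (2 : ℕ)) := by
        exact mul_le_mul_of_nonneg_left hsum (mul_nonneg (by linarith) (by positivity))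
    _ = (p - 1) * C₁ ^ (p - 2) * C₂ * ‖y‖ ^ p := by
        rw [Real.mul_rpow hC₁ (norm_nonneg y), hnorm]; ring

theorem abs_Dph_le_of_difference_bounds_general (d : ℕ) (p : ℝ) (hp : 2 ≤ p)
    (h r : ℝ) (hh : 0 < h) (hr : 0 < r) (M : ℝ)
    (ω : (Fin d → ℤ) → ℝ) (hsym : ∀ β, ω (-β) = ω β) (hnn : ∀ β, 0 ≤ ω β)
    (hzero : ∀ β, r ≤ ‖ygrid d h β‖ → ω β = 0)
    (hsum : ∑ᶠ β, ω β ≤ M * r ^ (-p))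
    (v : EuclideanSpace ℝ (Fin d) → ℝ)
    (C₁ C₂ : ℝ) (hC₁ : 0 ≤ C₁) (hC₂ : 0 ≤ C₂)
    (h1 : ∀ x y, |v (x + y) - v x| ≤ C₁ * ‖y‖)
    (h2 : ∀ x y, |v (x + y) + v (x - y) - 2 * v x| ≤ C₂ * ‖y‖ ^ (2 : ℕ))
    (x : EuclideanSpace ℝ (Fin d)) :
    |Dph d p h ω v x| ≤
        (p - 1) / 2 * C₁ ^ (p - 2) * C₂ * ∑ᶠ β, ‖ygrid d h β‖ ^ p * ω β ∧
      (p - 1) / 2 * C₁ ^ (p - 2) * C₂ * ∑ᶠ β, ‖ygrid d h β‖ ^ p * ω β ≤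
        (p - 1) / 2 * C₁ ^ (p - 2) * C₂ * M := by
  have hlt : ∀ β, ω β ≠ 0 → ‖ygrid d h β‖ < r := fun β hβ =>
    lt_of_not_ge fun hge => hβ (hzero β hge)
  have hω : ω.HasFiniteSupport := (finite_setOf_norm_ygrid_lt d hh.ne' r).subset hlt
  have hc : 0 ≤ (p - 1) / 2 * C₁ ^ (p - 2) * C₂ :=
    mul_nonneg (mul_nonneg (by linarith) (Real.rpow_nonneg hC₁ _)) hC₂
  refine ⟨?_, mul_le_mul_of_nonneg_left ?_ hc⟩
  · rw [mul_finsum]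
    refine abs_finsum_le_finsum_of_abs_add_comp_neg_le (hω.fun_mul_right _)
      (by fun_prop) fun β => ?_
    rw [ygrid_neg, hsym, ← sub_eq_add_neg, ← add_mul, abs_mul, abs_of_nonneg (hnn β)]
    calc _ ≤ (p - 1) * C₁ ^ (p - 2) * C₂ * ‖ygrid d h β‖ ^ p * ω β :=
          mul_le_mul_of_nonneg_right
            (abs_Jp_add_Jp_le_of_difference_bounds hp hC₁ h1 h2 x _) (hnn β)
      _ = _ := by ring
  · calc ∑ᶠ β, ‖ygrid d h β‖ ^ p * ω β ≤ r ^ p * ∑ᶠ β, ω β :=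
          finsum_mul_le_mul_finsum hω hnn fun β hβ => by gcongr; exact (hlt β hβ).le
      _ ≤ r ^ p * (M * r ^ (-p)) := by gcongr
      _ = M := by rw [Real.rpow_neg hr.le]; field_simp

/-- Bound for the discrete `p`-Laplacian of a function with Lipschitz-type first and
second order difference bounds. -/
theorem abs_Dph_le_of_difference_bounds (d : ℕ) (hd : 1 ≤ d) (p : ℝ) (hp : 2 ≤ p)
    (h r : ℝ) (hh : 0 < h) (hr : 0 < r) (M : ℝ) (hM : 0 < M)
    (ω : (Fin d → ℤ) → ℝ) (hsym : ∀ β, ω (-β) = ω β) (hnn : ∀ β, 0 ≤ ω β)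
    (hzero : ∀ β, r ≤ ‖ygrid d h β‖ → ω β = 0)
    (hsum : ∑ᶠ β, ω β ≤ M * r ^ (-p))
    (v : EuclideanSpace ℝ (Fin d) → ℝ) (hv : BddAbove (Set.range fun z => |v z|))
    (C₁ C₂ : ℝ) (hC₁ : 0 ≤ C₁) (hC₂ : 0 ≤ C₂)
    (h1 : ∀ x y, |v (x + y) - v x| ≤ C₁ * ‖y‖)
    (h2 : ∀ x y, |v (x + y) + v (x - y) - 2 * v x| ≤ C₂ * ‖y‖ ^ (2 : ℕ))
    (x : EuclideanSpace ℝ (Fin d)) :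
    |Dph d p h ω v x| ≤
        (p - 1) / 2 * C₁ ^ (p - 2) * C₂ * ∑ᶠ β, ‖ygrid d h β‖ ^ p * ω β ∧
      (p - 1) / 2 * C₁ ^ (p - 2) * C₂ * ∑ᶠ β, ‖ygrid d h β‖ ^ p * ω β ≤
        (p - 1) / 2 * C₁ ^ (p - 2) * C₂ * M :=
  abs_Dph_le_of_difference_bounds_general d p hp h r hh hr M ω hsym hnn hzero hsum v C₁ C₂ hC₁ hC₂
    h1 h2 x
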